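/- Let n > 2. For all x, y in the upper half space R^{n,+} with x ≠ y, the function G(·,y) is differentiable at x and its gradient is given by ∇_x G(x,y) = (4 x_n y_n)^{n−2} [ (x−ŷ)/(‖x−y‖^{n−2} ‖x−ŷ‖^{n}) − (x−y)/(‖x−y‖^{n} ‖x−ŷ‖^{n−2}) ]. -/

import Mathlib

noncomputable section

open MeasureTheory

def lastIdx (n : ℕ) [NeZero n] : Fin n := ⟨n - 1, Nat.sub_lt (Nat.pos_of_neZero n) Nat.one_pos⟩

def upperHalf (n : ℕ) [NeZero n] : Set (EuclideanSpace ℝ (Fin n)) :=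
  {x | 0 < x (lastIdx n)}

def reflect {n : ℕ} [NeZero n] (x : EuclideanSpace ℝ (Fin n)) : EuclideanSpace ℝ (Fin n) :=
  WithLp.toLp 2 (fun i : Fin n => if i = lastIdx n then -(x i) else x i)

def pderiv' {n : ℕ} (u : EuclideanSpace ℝ (Fin n) → ℝ) (i : Fin n)
    (x : EuclideanSpace ℝ (Fin n)) : ℝ :=
  fderiv ℝ u x (EuclideanSpace.single i 1)

def lap {n : ℕ} (u : EuclideanSpace ℝ (Fin n) → ℝ) (x : EuclideanSpace ℝ (Fin n)) : ℝ :=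
  ∑ i, pderiv' (pderiv' u i) i x

def G {n : ℕ} [NeZero n] (x y : EuclideanSpace ℝ (Fin n)) : ℝ :=
  ∫ t in (‖x - y‖ / ‖x - reflect y‖)..1, (1 - t^2)^(n-2) / t^(n-1)

def Hker {n : ℕ} [NeZero n] (x y : EuclideanSpace ℝ (Fin n)) : ℝ :=
  1 / (((n : ℝ) - 2) * ‖x - y‖^(n-2) * ‖x - reflect y‖^(n-2))

def sphInv {n : ℕ} (c : EuclideanSpace ℝ (Fin n)) (R : ℝ) (x : EuclideanSpace ℝ (Fin n)) :
    EuclideanSpace ℝ (Fin n) := c + (R^2 / ‖x - c‖^2) • (x - c)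

def emb (n : ℕ) (x : EuclideanSpace ℝ (Fin (n-1))) : EuclideanSpace ℝ (Fin n) :=
  WithLp.toLp 2 (fun i : Fin n => if h : (i : ℕ) < n - 1 then x ⟨i, h⟩ else 0)

def sphereArea (n : ℕ) : ℝ :=
  (n : ℝ) * (volume (Metric.ball (0 : EuclideanSpace ℝ (Fin n)) 1)).toReal

theorem aux_hasFDerivAt_norm_sub {E : Type*} [NormedAddCommGroup E] [InnerProductSpace ℝ E]
    (c x : E) (h : x ≠ c) :
    HasFDerivAt (fun z : E => ‖z - c‖) (innerSL ℝ (‖x - c‖⁻¹ • (x - c))) x := by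
  have hne : x - c ≠ 0 := sub_ne_zero.2 h
  have hpos : (0:ℝ) < ‖x - c‖ := norm_pos_iff.2 hne
  have h1 : HasFDerivAt (fun z : E => z - c) (ContinuousLinearMap.id ℝ E) x :=
    (hasFDerivAt_id x).sub_const c
  have h2 : HasFDerivAt (fun z : E => ‖z - c‖ ^ 2)
      (2 • (innerSL ℝ (x - c)).comp (ContinuousLinearMap.id ℝ E)) x := h1.norm_sq
  have h3 : HasDerivAt Real.sqrt (1 / (2 * Real.sqrt (‖x - c‖ ^ 2))) (‖x - c‖ ^ 2) :=
    Real.hasDerivAt_sqrt (by positivity)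
  have h4 := h3.comp_hasFDerivAt x h2
  rw [show (Real.sqrt ∘ fun z : E => ‖z - c‖ ^ 2) = fun z : E => ‖z - c‖ by
    funext z; exact Real.sqrt_sq (norm_nonneg _)] at h4
  refine h4.congr_fderiv ?_
  ext w
  simp only [ContinuousLinearMap.smul_apply, ContinuousLinearMap.coe_comp',
    Function.comp_apply, ContinuousLinearMap.coe_id', id_eq, innerSL_apply_apply,
    real_inner_smul_left, Real.sqrt_sq (norm_nonneg _)]
  rw [smul_eq_mul]
  field_simp
  ring

theorem aux_key_identity {n : ℕ} [NeZero n] (x y : EuclideanSpace ℝ (Fin n)) :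
    ‖x - reflect y‖ ^ 2 - ‖x - y‖ ^ 2 = 4 * x (lastIdx n) * y (lastIdx n) := by
  have h1 : ‖x - reflect y‖ ^ 2 = ∑ i, (x i - reflect y i) ^ 2 := by
    rw [EuclideanSpace.norm_eq, Real.sq_sqrt (by positivity)]
    simp [sq_abs]
  have h2 : ‖x - y‖ ^ 2 = ∑ i, (x i - y i) ^ 2 := by
    rw [EuclideanSpace.norm_eq, Real.sq_sqrt (by positivity)]
    simp [sq_abs]
  rw [h1, h2, ← Finset.sum_sub_distrib, Finset.sum_eq_single (lastIdx n)]
  · simp [reflect]; ring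
  · intro i _ hi; simp [reflect, hi]
  · simp


set_option maxHeartbeats 1000000 in
/-- explicit gradient of G(·,y). -/
theorem statement6 (n : ℕ) [NeZero n] (hn : 2 < n)
    (x y : EuclideanSpace ℝ (Fin n)) (hx : x ∈ upperHalf n) (hy : y ∈ upperHalf n)
    (hxy : x ≠ y) :
    HasGradientAt (fun z => G z y)
      (((4 * x (lastIdx n) * y (lastIdx n))^(n-2)) •
        ((‖x - y‖^(n-2) * ‖x - reflect y‖^n)⁻¹ • (x - reflect y)
          - (‖x - y‖^n * ‖x - reflect y‖^(n-2))⁻¹ • (x - y))) x := by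
  set c : EuclideanSpace ℝ (Fin n) := reflect y with hc
  set a : ℝ := ‖x - y‖ with ha
  set b : ℝ := ‖x - c‖ with hb
  have hxn : 0 < x (lastIdx n) := hx
  have hyn : 0 < y (lastIdx n) := hy
  have hkey : b ^ 2 - a ^ 2 = 4 * x (lastIdx n) * y (lastIdx n) := aux_key_identity x y
  have hxc : x ≠ c := by
    intro h
    have : x (lastIdx n) = -(y (lastIdx n)) := by
      rw [h]; simp [hc, reflect]
    linarith
  have ha_pos : (0:ℝ) < a := norm_pos_iff.2 (sub_ne_zero.2 hxy)
  have hb_pos : (0:ℝ) < b := norm_pos_iff.2 (sub_ne_zero.2 hxc)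
  have hab : a < b := by nlinarith
  set f : ℝ → ℝ := fun t => (1 - t ^ 2) ^ (n - 2) / t ^ (n - 1) with hf
  set s₀ : ℝ := a * b⁻¹ with hs₀
  have hs0_pos : 0 < s₀ := by positivity
  have hs0_lt : s₀ < 1 := by
    rw [hs₀, mul_inv_lt_iff₀ hb_pos]; simpa using hab
  have hcont : ContinuousAt f s₀ := by
    apply ContinuousAt.div (by fun_prop) (by fun_prop)
    exact pow_ne_zero _ hs0_pos.ne'
  have hInt : IntervalIntegrable f volume s₀ 1 := by
    apply ContinuousOn.intervalIntegrable
    apply ContinuousOn.div (by fun_prop) (by fun_prop)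
    intro t ht
    rw [Set.uIcc_of_le hs0_lt.le] at ht
    exact pow_ne_zero _ (lt_of_lt_of_le hs0_pos ht.1).ne'
  have hmeas : StronglyMeasurableAtFilter f (nhds s₀) volume := by
    refine ⟨Set.univ, Filter.univ_mem, ?_⟩
    exact (Measurable.aestronglyMeasurable (by measurability))
  have hF : HasDerivAt (fun u => ∫ t in u..(1:ℝ), f t) (-f s₀) s₀ :=
    intervalIntegral.integral_hasDerivAt_left hInt hmeas hcont
  -- derivative of z ↦ ‖z - y‖ * ‖z - c‖⁻¹
  have hA : HasFDerivAt (fun z : EuclideanSpace ℝ (Fin n) => ‖z - y‖) (innerSL ℝ (a⁻¹ • (x - y))) x :=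
    aux_hasFDerivAt_norm_sub y x hxy
  have hB : HasFDerivAt (fun z : EuclideanSpace ℝ (Fin n) => ‖z - c‖) (innerSL ℝ (b⁻¹ • (x - c))) x :=
    aux_hasFDerivAt_norm_sub c x hxc
  have hinv : HasDerivAt (fun t : ℝ => t⁻¹) (-(b ^ 2)⁻¹) b := hasDerivAt_inv hb_pos.ne'
  have hBinv : HasFDerivAt (fun z : EuclideanSpace ℝ (Fin n) => ‖z - c‖⁻¹)
      ((-(b ^ 2)⁻¹) • innerSL ℝ (b⁻¹ • (x - c))) x := by
    exact hinv.comp_hasFDerivAt x hB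
  have hDiv : HasFDerivAt (fun z : EuclideanSpace ℝ (Fin n) => ‖z - y‖ * ‖z - c‖⁻¹)
      (a • ((-(b ^ 2)⁻¹) • innerSL ℝ (b⁻¹ • (x - c))) + b⁻¹ • innerSL ℝ (a⁻¹ • (x - y))) x :=
    hA.mul hBinv
  have hcomp := hF.comp_hasFDerivAt x hDiv
  rw [hasGradientAt_iff_hasFDerivAt]
  have hfun : (fun z : EuclideanSpace ℝ (Fin n) => G z y) =
      ((fun u => ∫ t in u..(1:ℝ), f t) ∘ fun z : EuclideanSpace ℝ (Fin n) => ‖z - y‖ * ‖z - c‖⁻¹) := by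
    funext z
    simp only [G, Function.comp_apply, hf, div_eq_mul_inv, hc]
  rw [hfun]
  refine hcomp.congr_fderiv ?_
  -- CLM equality
  ext w
  obtain ⟨m, rfl⟩ : ∃ m, n = m + 3 := ⟨n - 3, by omega⟩
  have hnm2 : m + 3 - 2 = m + 1 := rfl
  have hnm1 : m + 3 - 1 = m + 2 := rfl
  simp only [ContinuousLinearMap.smul_apply, ContinuousLinearMap.add_apply,
    innerSL_apply_apply, InnerProductSpace.toDual_apply_apply, real_inner_smul_left, inner_sub_left,
    smul_eq_mul, hnm2, hnm1]
  set P : ℝ := inner ℝ (x - y) w with hP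
  set Q : ℝ := inner ℝ (x - c) w with hQ
  have h4 : 4 * x (lastIdx (m + 3)) * y (lastIdx (m + 3)) = b ^ 2 - a ^ 2 := hkey.symm
  rw [h4, hf]
  beta_reduce
  have h1s : 1 - s₀ ^ 2 = (b ^ 2 - a ^ 2) * (b ^ 2)⁻¹ := by
    rw [hs₀]; field_simp
  rw [hnm2, hnm1, h1s, hs₀]
  rw [mul_pow ((b ^ 2 - a ^ 2)) ((b^2)⁻¹), mul_pow a b⁻¹]
  simp only [inv_pow]
  field_simp
  ring
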